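/- arXiv:0901.1010 — 3 statements merged into one kernel-verified Lean document; each statement's English description precedes it below -/
import Mathlib

section
/- For all integers r ≥ 3, s ≥ 3 and t, every proper 4-coloring f of the triangulation T(r,s,t) has even degree, i.e., deg(f) ≡ 0 (mod 2). (This is the specialization to the 6-regular triangulations T(r,s,t) of Tutte's lemma that the degree of a 4-coloring is congruent modulo 2 to the sum of the vertex degrees over all vertices of any fixed color.) -/
/-- The subgroup Λ of ℤ² generated by (r,0) and (−t,s). -/
def torusLattice (r s t : ℤ) : AddSubgroup (ℤ × ℤ) :=
  AddSubgroup.closure {(r, 0), (-t, s)}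

/-- The vertex set ℤ²/Λ of the triangulation T(r,s,t). -/
abbrev TorusV (r s t : ℤ) := (ℤ × ℤ) ⧸ torusLattice r s t

/-- The quotient map ℤ² → ℤ²/Λ. -/
def tmk (r s t : ℤ) : (ℤ × ℤ) →+ TorusV r s t := QuotientAddGroup.mk' (torusLattice r s t)

/-- The six neighbour displacement vectors. -/
def hexDirs : Finset (ℤ × ℤ) := {(1,0), (-1,0), (0,1), (0,-1), (1,1), (-1,-1)}

/-- The triangulation T(r,s,t) of the torus: two distinct vertices are adjacent
iff their difference is the image of one of the six displacement vectors. -/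
def TriT (r s t : ℤ) : SimpleGraph (TorusV r s t) where
  Adj u v := u ≠ v ∧ ∃ d ∈ hexDirs, v - u = tmk r s t d
  symm := by
    refine ⟨?_⟩
    rintro u v ⟨hne, d, hd, hsub⟩
    refine ⟨hne.symm, -d, ?_, ?_⟩
    · fin_cases hd <;> decide
    · rw [show u - v = -(v - u) from (neg_sub v u).symm, hsub, ← map_neg]
  loopless := ⟨fun u h => h.1 rfl⟩

/-- A proper `q`-coloring of a simple graph. -/
def IsProperColoring {V : Type*} (G : SimpleGraph V) {q : ℕ} (f : V → Fin q) : Prop :=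
  ∀ ⦃u v : V⦄, G.Adj u v → f u ≠ f v

/-- The sign contribution of a face whose ordered vertex colors are `(a,b,c)`:
`+1` for the cyclic orientations of `(0,1,2)`, `-1` for those of `(0,2,1)`,
`0` otherwise. -/
def faceSign (a b c : Fin 4) : ℤ :=
  if (a, b, c) = ((0 : Fin 4), (1 : Fin 4), (2 : Fin 4)) ∨ (a, b, c) = (1, 2, 0)
      ∨ (a, b, c) = (2, 0, 1) then 1
  else if (a, b, c) = ((0 : Fin 4), (2 : Fin 4), (1 : Fin 4)) ∨ (a, b, c) = (2, 1, 0)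
      ∨ (a, b, c) = (1, 0, 2) then -1
  else 0

/-- The degree of a 4-coloring of T(r,s,t): the sum over all triangular faces
(each face counted exactly once, via the canonical vertex representatives in
the box [0,r)×[0,s)) of the signed contributions of the up-face and the
down-face based at each vertex. -/
def degT (r s t : ℤ) (f : TorusV r s t → Fin 4) : ℤ :=
  ∑ i ∈ Finset.range r.toNat, ∑ j ∈ Finset.range s.toNat,
    (faceSign (f (tmk r s t ((i : ℤ), (j : ℤ))))
              (f (tmk r s t ((i : ℤ) + 1, (j : ℤ) + 1)))
              (f (tmk r s t ((i : ℤ), (j : ℤ) + 1)))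
      + faceSign (f (tmk r s t ((i : ℤ), (j : ℤ))))
                 (f (tmk r s t ((i : ℤ) + 1, (j : ℤ))))
                 (f (tmk r s t ((i : ℤ) + 1, (j : ℤ) + 1))))

/-! For a face whose three colors are distinct, `faceSign` is `±1` exactly when color `3` is
missing, so it is congruent mod 2 to `1 +` the number of its vertices colored `3`. The up- and
down-face based at `v` share the edge `{v, v + (1,1)}`, so adding their congruences leaves mod 2
only the colors at `v + (0,1)` and `v + (1,0)`. Summed over the fundamental domain
`[0,r) × [0,s)`, each of these two translates counts every vertex of color `3` once, hence
`deg f ≡ 2 · #f⁻¹(3) ≡ 0`. -/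

section Lattice

variable {r s t : ℤ}

lemma mem_torusLattice_iff {p : ℤ × ℤ} :
    p ∈ torusLattice r s t ↔ ∃ a b : ℤ, a * r - b * t = p.1 ∧ b * s = p.2 := by
  rw [torusLattice, AddSubgroup.mem_closure_pair]
  simp [Prod.ext_iff, sub_eq_add_neg]

lemma tmk_eq_zero_iff {p : ℤ × ℤ} : tmk r s t p = 0 ↔ p ∈ torusLattice r s t :=
  QuotientAddGroup.eq_zero_iff p

lemma tmk_one_zero_ne_zero (hr : 1 < r) (hs : s ≠ 0) : tmk r s t (1, 0) ≠ 0 := by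
  rw [Ne, tmk_eq_zero_iff, mem_torusLattice_iff]
  rintro ⟨a, b, h1, h2⟩
  obtain rfl : b = 0 := by simpa [hs] using h2
  have := Int.le_of_dvd one_pos (⟨a, by simp only [zero_mul, sub_zero] at h1; linear_combination -h1⟩ : r ∣ 1)
  omega

lemma tmk_ne_zero_of_snd_eq_one (hs : 1 < s) {p : ℤ × ℤ} (hp : p.2 = 1) :
    tmk r s t p ≠ 0 := by
  rw [Ne, tmk_eq_zero_iff, mem_torusLattice_iff]
  rintro ⟨a, b, -, h2⟩
  have := Int.le_of_dvd one_pos (⟨b, by rw [← hp, ← h2, mul_comm]⟩ : s ∣ 1)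
  omega

lemma eq_of_tmk_eq {i j i' j' : ℤ} (hi : 0 ≤ i ∧ i < r) (hj : 0 ≤ j ∧ j < s)
    (hi' : 0 ≤ i' ∧ i' < r) (hj' : 0 ≤ j' ∧ j' < s) (h : tmk r s t (i, j) = tmk r s t (i', j')) :
    i = i' ∧ j = j' := by
  rw [← sub_eq_zero, ← map_sub, tmk_eq_zero_iff, mem_torusLattice_iff] at h
  obtain ⟨a, b, h1, h2⟩ := h
  simp only [Prod.mk_sub_mk] at h1 h2
  have hj0 : j - j' = 0 := Int.eq_zero_of_abs_lt_dvd ⟨b, by rw [← h2, mul_comm]⟩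
    (abs_sub_lt_iff.2 ⟨by omega, by omega⟩)
  obtain rfl : b = 0 := by simpa [hj0, (show s ≠ 0 by omega)] using h2
  have hi0 : i - i' = 0 := Int.eq_zero_of_abs_lt_dvd ⟨a, by rw [← h1, mul_comm]; ring⟩
    (abs_sub_lt_iff.2 ⟨by omega, by omega⟩)
  omega

lemma exists_tmk_eq (hr : 0 < r) (hs : 0 < s) (v : TorusV r s t) :
    ∃ i j : ℤ, (0 ≤ i ∧ i < r) ∧ (0 ≤ j ∧ j < s) ∧ tmk r s t (i, j) = v := by
  obtain ⟨⟨x, y⟩, rfl⟩ := QuotientAddGroup.mk'_surjective (torusLattice r s t) v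
  refine ⟨(x + y / s * t) % r, y % s, ⟨Int.emod_nonneg _ hr.ne', Int.emod_lt_of_pos _ hr⟩,
    ⟨Int.emod_nonneg _ hs.ne', Int.emod_lt_of_pos _ hs⟩, ?_⟩
  rw [tmk, QuotientAddGroup.mk'_eq_mk']
  have hx := Int.mul_ediv_add_emod (x + y / s * t) r
  have hy := Int.mul_ediv_add_emod y s
  refine ⟨(x - (x + y / s * t) % r, y - y % s),
    mem_torusLattice_iff.2 ⟨(x + y / s * t) / r, y / s, by linarith, by linarith⟩,
    by simp⟩

lemma tmk_box_bijective (hr : 0 < r) (hs : 0 < s) :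
    Function.Bijective fun p : Fin r.toNat × Fin s.toNat => tmk r s t ((p.1 : ℤ), (p.2 : ℤ)) := by
  constructor
  · rintro ⟨i, j⟩ ⟨i', j'⟩ h
    dsimp only at h
    obtain ⟨hii', hjj'⟩ := eq_of_tmk_eq ⟨by omega, by omega⟩ ⟨by omega, by omega⟩
      ⟨by omega, by omega⟩ ⟨by omega, by omega⟩ h
    simp only [Prod.mk.injEq, Fin.ext_iff]
    omega
  · intro v
    obtain ⟨i, j, hi, hj, rfl⟩ := exists_tmk_eq hr hs v
    exact ⟨(⟨i.toNat, by omega⟩, ⟨j.toNat, by omega⟩), by simp [hi.1, hj.1]⟩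

lemma sum_box_add {M : Type*} [AddCommMonoid M] (hr : 0 < r) (hs : 0 < s)
    (g : TorusV r s t → M) (w : TorusV r s t) :
    ∑ i ∈ Finset.range r.toNat, ∑ j ∈ Finset.range s.toNat, g (tmk r s t (i, j) + w) =
      ∑ i ∈ Finset.range r.toNat, ∑ j ∈ Finset.range s.toNat, g (tmk r s t (i, j)) := by
  let : Fintype (TorusV r s t) := Fintype.ofBijective _ (tmk_box_bijective hr hs)
  have sum_box : ∀ h : TorusV r s t → M,
      ∑ i ∈ Finset.range r.toNat, ∑ j ∈ Finset.range s.toNat, h (tmk r s t (i, j)) = ∑ v, h v := by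
    intro h
    simp only [Finset.sum_range, ← Fintype.sum_prod_type']
    exact Fintype.sum_bijective _ (tmk_box_bijective hr hs) _ _ fun _ => rfl
  rw [sum_box (fun v => g (v + w)), sum_box g]
  exact Fintype.sum_equiv (Equiv.addRight w) _ _ fun _ => rfl

end Lattice

lemma IsProperColoring.apply_tmk_ne {r s t : ℤ} {f : TorusV r s t → Fin 4}
    (hf : IsProperColoring (TriT r s t) f) (hr : 1 < r) (hs : 1 < s) {p q : ℤ × ℤ}
    (h : q - p = (1, 0) ∨ q - p = (0, 1) ∨ q - p = (1, 1)) : f (tmk r s t p) ≠ f (tmk r s t q) := by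
  have hne : tmk r s t (q - p) ≠ 0 := by
    rcases h with h | h | h <;> rw [h]
    · exact tmk_one_zero_ne_zero hr (by omega)
    all_goals exact tmk_ne_zero_of_snd_eq_one hs rfl
  refine hf ⟨fun heq => hne ?_, q - p, ?_, by rw [map_sub]⟩
  · rw [map_sub, heq, sub_self]
  · rcases h with h | h | h <;> rw [h] <;> decide

def indThree (x : Fin 4) : ℤ := if x = 3 then 1 else 0

lemma faceSign_modEq {a b c : Fin 4} (hab : a ≠ b) (hac : a ≠ c) (hbc : b ≠ c) :
    faceSign a b c ≡ 1 + indThree a + indThree b + indThree c [ZMOD 2] := by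
  revert a b c
  decide

lemma faceSign_cell_modEq {r s t : ℤ} {f : TorusV r s t → Fin 4}
    (hf : IsProperColoring (TriT r s t) f) (hr : 1 < r) (hs : 1 < s) (x y : ℤ) :
    faceSign (f (tmk r s t (x, y))) (f (tmk r s t (x + 1, y + 1))) (f (tmk r s t (x, y + 1)))
        + faceSign (f (tmk r s t (x, y))) (f (tmk r s t (x + 1, y))) (f (tmk r s t (x + 1, y + 1)))
      ≡ indThree (f (tmk r s t (x, y + 1))) + indThree (f (tmk r s t (x + 1, y))) [ZMOD 2] := by
  set a := f (tmk r s t (x, y))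
  set b := f (tmk r s t (x + 1, y + 1))
  set c := f (tmk r s t (x, y + 1))
  set d := f (tmk r s t (x + 1, y))
  have up := faceSign_modEq (a := a) (b := b) (c := c) (hf.apply_tmk_ne hr hs (by simp)) (hf.apply_tmk_ne hr hs (by simp))
    (hf.apply_tmk_ne hr hs (by simp)).symm
  have down := faceSign_modEq (a := a) (b := d) (c := b) (hf.apply_tmk_ne hr hs (by simp)) (hf.apply_tmk_ne hr hs (by simp))
    (hf.apply_tmk_ne hr hs (by simp))
  calc faceSign a b c + faceSign a d b
      ≡ (1 + indThree a + indThree b + indThree c) + (1 + indThree a + indThree d + indThree b)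
        [ZMOD 2] := up.add down
    _ = indThree c + indThree d + 2 * (1 + indThree a + indThree b) := by ring
    _ ≡ indThree c + indThree d [ZMOD 2] := Int.add_mul_emod_self_left _ _ _

/-- Every proper 4-coloring of the triangulation T(r,s,t) has even degree. -/
theorem deg_even (r s t : ℤ) (hr : 3 ≤ r) (hs : 3 ≤ s)
    (f : TorusV r s t → Fin 4) (hf : IsProperColoring (TriT r s t) f) :
    (2 : ℤ) ∣ degT r s t f := by
  set S := ∑ i ∈ Finset.range r.toNat, ∑ j ∈ Finset.range s.toNat,
    indThree (f (tmk r s t (i, j)))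
  have shift (a b : ℤ) : ∑ i ∈ Finset.range r.toNat, ∑ j ∈ Finset.range s.toNat,
      indThree (f (tmk r s t (i + a, j + b))) = S := by
    simpa only [← map_add, Prod.mk_add_mk] using
      sum_box_add (by omega) (by omega) (fun v => indThree (f v)) (tmk r s t (a, b))
  rw [← Int.modEq_zero_iff_dvd]
  calc degT r s t f
      ≡ ∑ i ∈ Finset.range r.toNat, ∑ j ∈ Finset.range s.toNat,
          (indThree (f (tmk r s t (i, j + 1))) + indThree (f (tmk r s t (i + 1, j)))) [ZMOD 2] :=
        Int.ModEq.sum fun i _ => Int.ModEq.sum fun j _ =>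
          faceSign_cell_modEq hf (by omega) (by omega) i j
    _ = S + S := by
      simp only [Finset.sum_add_distrib]
      congr 1
      · simpa using shift 0 1
      · simpa using shift 1 0
    _ = 2 * S := (two_mul S).symm
    _ ≡ 0 [ZMOD 2] := Int.modEq_zero_iff_dvd.2 (dvd_mul_right 2 S)
end

section
/- Let r and s be integers. (a) If r, s ≥ 3 and there exists a proper 4-coloring of T(r,s) whose degree is ≡ 2 (mod 4), then there exists a proper 4-coloring of T(3r,3s) whose degree is ≡ 6 (mod 12). (b) If r ≥ 1, s ≥ 3 and there exists a proper 4-coloring of T(3r,s) whose degree is ≡ 2 (mod 4), or if r ≥ 3, s ≥ 1 and there exists a proper 4-coloring of T(r,3s) whose degree is ≡ 2 (mod 4), then there exists a proper 4-coloring of T(3r,3s) whose degree is ≡ 6 (mod 12). (c) If r, s ≥ 1 and there exists a proper 4-coloring of T(3r,3s) whose degree is ≡ 6 (mod 12), then for all odd positive integers p and q there exists a proper 4-coloring of T(3rp,3sq) whose degree is ≡ 6 (mod 12). -/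
open Classical in
/-- A single Kempe change. -/
def KempeStep {V : Type*} (G : SimpleGraph V) {q : ℕ} (f g : V → Fin q) : Prop :=
  ∃ a b : Fin q, a ≠ b ∧
    ∃ C : (G.induce {v | f v = a ∨ f v = b}).ConnectedComponent,
      ∀ v : V,
        g v = if h : f v = a ∨ f v = b then
                if (G.induce {v | f v = a ∨ f v = b}).connectedComponentMk ⟨v, h⟩ = C
                then Equiv.swap a b (f v) else f v
              else f v

/-- Kempe equivalence: a finite sequence of Kempe changes. -/
def KempeEquiv {V : Type*} (G : SimpleGraph V) {q : ℕ} (f g : V → Fin q) : Prop :=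
  Relation.ReflTransGen (KempeStep G) f g

/-- The six neighbour displacement vectors of the triangular lattice. -/
def hexDirsM (r s : ℕ) : Set (ZMod r × ZMod s) :=
  {(1,0), (-1,0), (0,1), (0,-1), (1,1), (-1,-1)}

/-- The triangulation `T(r,s)` of the torus. -/
def TriRS (r s : ℕ) : SimpleGraph (ZMod r × ZMod s) where
  Adj u v := u ≠ v ∧ v - u ∈ hexDirsM r s
  symm := ⟨by
    rintro u v ⟨hne, hmem⟩
    refine ⟨hne.symm, ?_⟩
    rw [show u - v = -(v - u) from (neg_sub v u).symm]
    simp only [hexDirsM, Set.mem_insert_iff, Set.mem_singleton_iff] at hmem ⊢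
    rcases hmem with h|h|h|h|h|h <;> rw [h] <;> simp [Prod.ext_iff]⟩
  loopless := ⟨fun u h => h.1 rfl⟩

/-- The degree of a 4-coloring of `T(r,s)`. -/
def degRS (r s : ℕ) (f : ZMod r × ZMod s → Fin 4) : ℤ :=
  ∑ i ∈ Finset.range r, ∑ j ∈ Finset.range s,
    (faceSign (f ((i : ZMod r), (j : ZMod s)))
              (f ((i : ZMod r) + 1, (j : ZMod s) + 1))
              (f ((i : ZMod r), (j : ZMod s) + 1))
      + faceSign (f ((i : ZMod r), (j : ZMod s)))
                 (f ((i : ZMod r) + 1, (j : ZMod s)))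
                 (f ((i : ZMod r) + 1, (j : ZMod s) + 1)))

/-! The projection `T(a·r, b·s) → T(r, s)` reducing coordinates modulo `r` and `s` is a graph
homomorphism (a covering of tori) as soon as neither `r` nor `s` is `1`, so it pulls proper
colorings back to proper colorings. Each face of `T(r, s)` has exactly `a·b` preimage faces with
the same ordered colors, hence the degree gets multiplied by `a·b`; the congruences then follow
from `9·(2 mod 4) = 3·(2 mod 4) = 6 mod 12` and `odd · (6 mod 12) = 6 mod 12`. -/

open Finset

lemma sum_range_mul_natCast_zmod {M : Type*} [AddCommMonoid M] (a n : ℕ) (g : ZMod n → M) :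
    ∑ i ∈ range (a * n), g i = a • ∑ i ∈ range n, g i := by
  induction a with
  | zero => simp
  | succ a ih =>
    rw [Nat.succ_mul, sum_range_add, ih, succ_nsmul]
    congr 1
    refine sum_congr rfl fun i _ => ?_
    rw [Nat.cast_add, Nat.cast_mul, ZMod.natCast_self, mul_zero, zero_add]

lemma map_mem_hexDirsM {r s r' s' : ℕ} (φ : ZMod r' →+* ZMod r) (ψ : ZMod s' →+* ZMod s)
    {d : ZMod r' × ZMod s'} (hd : d ∈ hexDirsM r' s') : (φ d.1, ψ d.2) ∈ hexDirsM r s := by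
  simp only [hexDirsM, Set.mem_insert_iff, Set.mem_singleton_iff] at hd ⊢
  rcases hd with rfl | rfl | rfl | rfl | rfl | rfl <;> simp

lemma zero_notMem_hexDirsM {r s : ℕ} (hr : r ≠ 1) (hs : s ≠ 1) :
    (0 : ZMod r × ZMod s) ∉ hexDirsM r s := by
  have := ZMod.nontrivial_iff.2 hr
  have := ZMod.nontrivial_iff.2 hs
  simp [hexDirsM, Prod.ext_iff]

lemma triRS_adj_iff {r s : ℕ} (hr : r ≠ 1) (hs : s ≠ 1) {u v : ZMod r × ZMod s} :
    (TriRS r s).Adj u v ↔ v - u ∈ hexDirsM r s := by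
  refine ⟨And.right, fun h => ⟨fun huv => zero_notMem_hexDirsM hr hs ?_, h⟩⟩
  rwa [huv, sub_self] at h

def torusProj {r s r' s' : ℕ} (hr : r ∣ r') (hs : s ∣ s') (v : ZMod r' × ZMod s') :
    ZMod r × ZMod s :=
  (ZMod.castHom hr (ZMod r) v.1, ZMod.castHom hs (ZMod s) v.2)

def torusCover {r s r' s' : ℕ} (hr : r ∣ r') (hs : s ∣ s') (hr1 : r ≠ 1) (hs1 : s ≠ 1) :
    TriRS r' s' →g TriRS r s where
  toFun := torusProj hr hs
  map_rel' {u v} huv := by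
    rw [triRS_adj_iff hr1 hs1]
    simpa only [torusProj, Prod.mk_sub_mk, Prod.fst_sub, Prod.snd_sub, map_sub] using
      map_mem_hexDirsM (ZMod.castHom hr (ZMod r)) (ZMod.castHom hs (ZMod s)) huv.2

lemma IsProperColoring.comp_hom {V W : Type*} {G : SimpleGraph V} {H : SimpleGraph W} {q : ℕ}
    {f : W → Fin q} (hf : IsProperColoring H f) (φ : G →g H) : IsProperColoring G (f ∘ φ) :=
  fun _ _ huv => hf (φ.map_rel huv)

def facePairSign {r s : ℕ} (f : ZMod r × ZMod s → Fin 4) (x : ZMod r) (y : ZMod s) : ℤ :=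
  faceSign (f (x, y)) (f (x + 1, y + 1)) (f (x, y + 1)) +
    faceSign (f (x, y)) (f (x + 1, y)) (f (x + 1, y + 1))

lemma degRS_comp_torusProj (r s a b : ℕ) (f : ZMod r × ZMod s → Fin 4) :
    degRS (a * r) (b * s) (f ∘ torusProj (dvd_mul_left r a) (dvd_mul_left s b)) =
      a * b * degRS r s f := by
  have hpull : degRS (a * r) (b * s) (f ∘ torusProj (dvd_mul_left r a) (dvd_mul_left s b)) =
      ∑ i ∈ range (a * r), ∑ j ∈ range (b * s), facePairSign f (i : ZMod r) (j : ZMod s) := by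
    simp [degRS, facePairSign, torusProj]
  rw [hpull, sum_range_mul_natCast_zmod a r (fun x => ∑ j ∈ range (b * s), facePairSign f x j)]
  simp only [sum_range_mul_natCast_zmod b s, nsmul_eq_mul, ← mul_sum, mul_assoc]
  rfl

lemma exists_properColoring_lift {r s r' s' : ℕ} (a b : ℕ) (hr' : r' = a * r) (hs' : s' = b * s)
    (hr : r ≠ 1) (hs : s ≠ 1) {f : ZMod r × ZMod s → Fin 4} (hf : IsProperColoring (TriRS r s) f) :
    ∃ g : ZMod r' × ZMod s' → Fin 4,
      IsProperColoring (TriRS r' s') g ∧ degRS r' s' g = a * b * degRS r s f := by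
  subst hr' hs'
  exact ⟨_, hf.comp_hom (torusCover (dvd_mul_left r a) (dvd_mul_left s b) hr hs),
    degRS_comp_torusProj r s a b f⟩

lemma Int.odd_mul_modEq_six {n d : ℤ} (hn : Odd n) (hd : d ≡ 6 [ZMOD 12]) :
    n * d ≡ 6 [ZMOD 12] := by
  obtain ⟨m, rfl⟩ := hn
  obtain ⟨k, hk⟩ := Int.modEq_iff_dvd.1 hd.symm
  exact Int.modEq_iff_dvd.2 ⟨-(m + 2 * m * k + k), by linear_combination (-(2 * m + 1)) * hk⟩

/-- Degree-lifting lemma for periodic extensions of 4-colorings.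
(a) A 4-coloring of T(r,s) of degree ≡ 2 (mod 4) yields one of T(3r,3s) of
degree ≡ 6 (mod 12).
(b) The same conclusion follows from a 4-coloring of T(3r,s) or of T(r,3s) of
degree ≡ 2 (mod 4).
(c) A 4-coloring of T(3r,3s) of degree ≡ 6 (mod 12) yields, for all odd
`p, q ≥ 1`, one of T(3rp,3sq) of degree ≡ 6 (mod 12). -/
theorem degree_lifting :
    (∀ r s : ℕ, 3 ≤ r → 3 ≤ s →
      (∃ f : ZMod r × ZMod s → Fin 4,
          IsProperColoring (TriRS r s) f ∧ degRS r s f ≡ 2 [ZMOD 4]) →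
      (∃ g : ZMod (3 * r) × ZMod (3 * s) → Fin 4,
          IsProperColoring (TriRS (3 * r) (3 * s)) g ∧
          degRS (3 * r) (3 * s) g ≡ 6 [ZMOD 12])) ∧
    (∀ r s : ℕ, 1 ≤ r → 3 ≤ s →
      (∃ f : ZMod (3 * r) × ZMod s → Fin 4,
          IsProperColoring (TriRS (3 * r) s) f ∧ degRS (3 * r) s f ≡ 2 [ZMOD 4]) →
      (∃ g : ZMod (3 * r) × ZMod (3 * s) → Fin 4,
          IsProperColoring (TriRS (3 * r) (3 * s)) g ∧
          degRS (3 * r) (3 * s) g ≡ 6 [ZMOD 12])) ∧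
    (∀ r s : ℕ, 3 ≤ r → 1 ≤ s →
      (∃ f : ZMod r × ZMod (3 * s) → Fin 4,
          IsProperColoring (TriRS r (3 * s)) f ∧ degRS r (3 * s) f ≡ 2 [ZMOD 4]) →
      (∃ g : ZMod (3 * r) × ZMod (3 * s) → Fin 4,
          IsProperColoring (TriRS (3 * r) (3 * s)) g ∧
          degRS (3 * r) (3 * s) g ≡ 6 [ZMOD 12])) ∧
    (∀ r s : ℕ, 1 ≤ r → 1 ≤ s →
      (∃ f : ZMod (3 * r) × ZMod (3 * s) → Fin 4,
          IsProperColoring (TriRS (3 * r) (3 * s)) f ∧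
          degRS (3 * r) (3 * s) f ≡ 6 [ZMOD 12]) →
      ∀ p q : ℕ, 0 < p → Odd p → 0 < q → Odd q →
        (∃ g : ZMod (3 * r * p) × ZMod (3 * s * q) → Fin 4,
            IsProperColoring (TriRS (3 * r * p) (3 * s * q)) g ∧
            degRS (3 * r * p) (3 * s * q) g ≡ 6 [ZMOD 12])) := by
  refine ⟨?_, ?_, ?_, ?_⟩
  · rintro r s hr hs ⟨f, hf, hd⟩
    obtain ⟨g, hg, hdeg⟩ := exists_properColoring_lift 3 3 rfl rfl (by omega) (by omega) hf
    refine ⟨g, hg, ?_⟩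
    rw [Int.ModEq] at hd ⊢
    push_cast [hdeg]
    omega
  · rintro r s hr hs ⟨f, hf, hd⟩
    obtain ⟨g, hg, hdeg⟩ :=
      exists_properColoring_lift 1 3 (one_mul _).symm rfl (by omega) (by omega) hf
    refine ⟨g, hg, ?_⟩
    rw [Int.ModEq] at hd ⊢
    push_cast [hdeg]
    omega
  · rintro r s hr hs ⟨f, hf, hd⟩
    obtain ⟨g, hg, hdeg⟩ :=
      exists_properColoring_lift 3 1 rfl (one_mul _).symm (by omega) (by omega) hf
    refine ⟨g, hg, ?_⟩
    rw [Int.ModEq] at hd ⊢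
    push_cast [hdeg]
    omega
  · rintro r s hr hs ⟨f, hf, hd⟩ p q - hop - hoq
    obtain ⟨g, hg, hdeg⟩ :=
      exists_properColoring_lift p q (mul_comm _ _) (mul_comm _ _) (by omega) (by omega) hf
    refine ⟨g, hg, ?_⟩
    rw [hdeg, ← Int.natCast_mul]
    exact Int.odd_mul_modEq_six (hop.mul hoq).natCast hd
end

section
/- Gluing lemma: Let L ≥ 3 and M ≥ 3 be integers, let c be a proper 4-coloring of T(L,M) and c' a proper 4-coloring of T(L,3), and suppose c'(x, 2) = c(x, M−1) for every x ∈ ZMod L (i.e., the two colorings have the same top row). Define c'' on (ZMod L) × (ZMod (M+3)) by: for y ∈ ZMod (M+3) with representative ŷ ∈ {0, …, M+2}, set c''(x,y) = c(x, ŷ) if 0 ≤ ŷ ≤ M−1 (with ŷ read in ZMod M), and c''(x,y) = c'(x, ŷ−M) if M ≤ ŷ ≤ M+2 (with ŷ−M read in ZMod 3). Then c'' is a proper 4-coloring of T(L, M+3) and deg(c'') = deg(c). -/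
/-- The coloring of T(L,M+3) obtained by stacking a coloring of T(L,M) (rows
`0 … M−1`) on top of a coloring of T(L,3) (rows `M … M+2`). -/
def glue (L M : ℕ) (c : ZMod L × ZMod M → Fin 4) (c' : ZMod L × ZMod 3 → Fin 4) :
    ZMod L × ZMod (M + 3) → Fin 4 := fun p =>
  if p.2.val < M then c (p.1, (p.2.val : ZMod M))
  else c' (p.1, ((p.2.val - M : ℕ) : ZMod 3))

/-!
Both claims are local in pairs of consecutive rows. A coloring of `T(r,s)` is proper iff every
band of two consecutive rows is properly colored, and each band of the glued coloring is a band
of `c` or of `c'`, because the top row of `c'` repeats the top row of `c`. The degree is likewise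
a sum of band contributions; the glued coloring has exactly the bands of `c` and `c'`, except that
the two seam bands exchange their lower rows, which are equal. Hence
`deg (glue c c') = deg c + deg c'`. Finally a proper coloring of `T(r,3)` has degree `0`: each
column is a triangle, the six faces between two adjacent columns contribute the difference of the
signs of these two triangles (a finite check), and the sum over all columns telescopes.
-/

section Rows

variable {r s q : ℕ} {α : Type*}

def row (f : ZMod r × ZMod s → α) (y : ZMod s) : ZMod r → α := fun x => f (x, y)

def IsProperBand (a b : ZMod r → Fin q) : Prop :=
  ∀ x, a x ≠ a (x + 1) ∧ a x ≠ b x ∧ a x ≠ b (x + 1)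

lemma IsProperColoring.ne_add {f : ZMod r × ZMod s → Fin q} (hf : IsProperColoring (TriRS r s) f)
    {d : ZMod r × ZMod s} (hd : d ∈ hexDirsM r s) (hd0 : d ≠ 0) (u : ZMod r × ZMod s) :
    f u ≠ f (u + d) :=
  hf ⟨left_ne_add.mpr hd0, by simpa using hd⟩

lemma IsProperColoring.isProperBand (hr : r ≠ 1) (hs : s ≠ 1) {f : ZMod r × ZMod s → Fin q}
    (hf : IsProperColoring (TriRS r s) f) (y : ZMod s) :
    IsProperBand (row f y) (row f (y + 1)) := by
  have := ZMod.nontrivial_iff.mpr hr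
  have := ZMod.nontrivial_iff.mpr hs
  intro x
  refine ⟨?_, ?_, ?_⟩ <;>
    [convert hf.ne_add (d := (1, 0)) ?_ ?_ (x, y); convert hf.ne_add (d := (0, 1)) ?_ ?_ (x, y);
      convert hf.ne_add (d := (1, 1)) ?_ ?_ (x, y)] <;> simp [hexDirsM, row]

lemma isProperColoring_of_isProperBand {f : ZMod r × ZMod s → Fin q}
    (hf : ∀ y, IsProperBand (row f y) (row f (y + 1))) : IsProperColoring (TriRS r s) f := by
  have hup : ∀ u d, d = (1, 0) ∨ d = (0, 1) ∨ d = (1, 1) → f u ≠ f (u + d) := by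
    rintro ⟨x, y⟩ d (rfl | rfl | rfl) <;> simp only [Prod.mk_add_mk, add_zero]
    exacts [(hf y x).1, (hf y x).2.1, (hf y x).2.2]
  rintro u v ⟨-, hd⟩
  have hneg : u - v = -(v - u) := (neg_sub v u).symm
  obtain h | h : (v - u = (1, 0) ∨ v - u = (0, 1) ∨ v - u = (1, 1)) ∨
      (u - v = (1, 0) ∨ u - v = (0, 1) ∨ u - v = (1, 1)) := by
    simp only [hexDirsM, Set.mem_insert_iff, Set.mem_singleton_iff] at hd
    rw [hneg, neg_eq_iff_eq_neg, neg_eq_iff_eq_neg, neg_eq_iff_eq_neg]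
    simp only [Prod.neg_mk, neg_zero]
    tauto
  · simpa using hup u _ h
  · simpa using (hup v _ h).symm

end Rows

section Degree

variable {r s : ℕ}

def cellSign (a b : ZMod r → Fin 4) (x : ZMod r) : ℤ :=
  faceSign (a x) (b (x + 1)) (b x) + faceSign (a x) (a (x + 1)) (b (x + 1))

def bandDeg (a b : ZMod r → Fin 4) : ℤ :=
  ∑ i ∈ Finset.range r, cellSign a b i

lemma degRS_eq_sum_bandDeg (f : ZMod r × ZMod s → Fin 4) :
    degRS r s f = ∑ j ∈ Finset.range s, bandDeg (row f j) (row f (j + 1 : ℕ)) := by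
  rw [degRS, Finset.sum_comm]
  push_cast
  rfl

lemma faceSign_annulus (a₀ a₁ a₂ b₀ b₁ b₂ : Fin 4)
    (ha : a₀ ≠ a₁ ∧ a₁ ≠ a₂ ∧ a₂ ≠ a₀) (hb : b₀ ≠ b₁ ∧ b₁ ≠ b₂ ∧ b₂ ≠ b₀)
    (hab : a₀ ≠ b₀ ∧ a₁ ≠ b₁ ∧ a₂ ≠ b₂) (hab' : a₀ ≠ b₁ ∧ a₁ ≠ b₂ ∧ a₂ ≠ b₀) :
    (faceSign a₀ b₁ a₁ + faceSign a₀ b₀ b₁) + (faceSign a₁ b₂ a₂ + faceSign a₁ b₁ b₂)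
      + (faceSign a₂ b₀ a₀ + faceSign a₂ b₂ b₀) = faceSign b₀ b₁ b₂ - faceSign a₀ a₁ a₂ := by
  revert a₀ a₁ a₂ b₀ b₁ b₂
  decide

lemma degRS_three_eq_zero (hr : r ≠ 1) {f : ZMod r × ZMod 3 → Fin 4}
    (hf : IsProperColoring (TriRS r 3) f) : degRS r 3 f = 0 := by
  set g : ℕ → ℤ := fun i => faceSign (f (i, 0)) (f (i, 1)) (f (i, 2))
  have hcol : ∀ i : ℕ, ∑ j ∈ Finset.range 3, cellSign (row f j) (row f (j + 1 : ℕ)) i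
      = g (i + 1) - g i := by
    intro i
    have h3 : (2 : ZMod 3) + 1 = 0 := by decide
    have hcell : ∀ (j : ZMod 3) (x : ZMod r),
        f (x, j) ≠ f (x + 1, j) ∧ f (x, j) ≠ f (x, j + 1) ∧ f (x, j) ≠ f (x + 1, j + 1) :=
      fun j x => hf.isProperBand hr (by decide) j x
    obtain ⟨-, ha₀, hab₀⟩ := hcell 0 i
    obtain ⟨-, ha₁, hab₁⟩ := hcell 1 i
    obtain ⟨-, ha₂, hab₂⟩ := hcell 2 i
    obtain ⟨-, hb₀, -⟩ := hcell 0 (i + 1)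
    obtain ⟨-, hb₁, -⟩ := hcell 1 (i + 1)
    obtain ⟨-, hb₂, -⟩ := hcell 2 (i + 1)
    simp only [zero_add, one_add_one_eq_two, h3] at ha₀ ha₁ ha₂ hab₀ hab₁ hab₂ hb₀ hb₁ hb₂
    have := faceSign_annulus _ _ _ _ _ _ ⟨ha₀, ha₁, ha₂⟩ ⟨hb₀, hb₁, hb₂⟩
      ⟨(hcell 0 i).1, (hcell 1 i).1, (hcell 2 i).1⟩ ⟨hab₀, hab₁, hab₂⟩
    simp only [Finset.sum_range_succ, Finset.sum_range_zero, cellSign, row, g]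
    push_cast
    rw [show (3 : ZMod 3) = 0 by decide]
    linarith
  calc degRS r 3 f = ∑ i ∈ Finset.range r, (g (i + 1) - g i) := by
        rw [degRS_eq_sum_bandDeg]
        simp only [bandDeg]
        rw [Finset.sum_comm]
        exact Finset.sum_congr rfl fun i _ => hcol i
    _ = 0 := by rw [Finset.sum_range_sub]; simp [g]

end Degree

section Glue

variable {L M : ℕ} (c : ZMod L × ZMod M → Fin 4) (c' : ZMod L × ZMod 3 → Fin 4)

lemma row_glue_of_lt {k : ℕ} (hk : k < M) :
    row (glue L M c c') (k : ZMod (M + 3)) = row c (k : ZMod M) := by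
  funext x
  simp [row, glue, ZMod.val_cast_of_lt (by omega : k < M + 3), hk]

lemma row_glue_of_le {k : ℕ} (hMk : M ≤ k) (hk : k < M + 3) :
    row (glue L M c c') (k : ZMod (M + 3)) = row c' ((k - M : ℕ) : ZMod 3) := by
  funext x
  simp [row, glue, ZMod.val_cast_of_lt hk, hMk]

lemma isProperBand_row_glue (hM : M ≠ 0) (hc : ∀ y, IsProperBand (row c y) (row c (y + 1)))
    (hc' : ∀ y, IsProperBand (row c' y) (row c' (y + 1)))
    (htop : row c' 2 = row c ((M - 1 : ℕ) : ZMod M)) (y : ZMod (M + 3)) :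
    IsProperBand (row (glue L M c c') y) (row (glue L M c c') (y + 1)) := by
  obtain ⟨m, rfl⟩ : ∃ m, M = m + 1 := Nat.exists_eq_succ_of_ne_zero hM
  obtain ⟨k, hk, rfl⟩ : ∃ k < m + 1 + 3, (k : ZMod (m + 1 + 3)) = y :=
    ⟨y.val, y.val_lt, ZMod.natCast_zmod_val y⟩
  rw [Nat.add_sub_cancel] at htop
  rw [← Nat.cast_succ]
  rcases (by omega : k < m ∨ k = m ∨ k = m + 1 ∨ k = m + 2 ∨ k = m + 3) with hk | hk | hk | hk | hk
  · rw [row_glue_of_lt c c' (by omega : k < m + 1), row_glue_of_lt c c' (by omega : k + 1 < m + 1)]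
    simpa using hc k
  · subst k
    rw [row_glue_of_lt c c' (by omega : m < m + 1), row_glue_of_le c c' le_rfl (by omega), ← htop]
    simpa [show (2 : ZMod 3) + 1 = 0 by decide] using hc' 2
  · subst k
    rw [row_glue_of_le c c' le_rfl (by omega), row_glue_of_le c c' (by omega) (by omega)]
    simpa using hc' 0
  · subst k
    rw [row_glue_of_le c c' (by omega) (by omega), row_glue_of_le c c' (by omega) (by omega)]
    simpa [show (1 : ZMod 3) + 1 = 2 by decide] using hc' 1
  · subst k
    have hwrap : (((m + 3).succ : ℕ) : ZMod (m + 1 + 3)) = ((0 : ℕ) : ZMod (m + 1 + 3)) := by simp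
    rw [row_glue_of_le c c' (by omega) (by omega), hwrap, row_glue_of_lt c c' (by omega)]
    simpa [htop] using hc m

lemma degRS_glue (hM : M ≠ 0) (htop : row c' 2 = row c ((M - 1 : ℕ) : ZMod M)) :
    degRS L (M + 3) (glue L M c c') = degRS L M c + degRS L 3 c' := by
  obtain ⟨m, rfl⟩ : ∃ m, M = m + 1 := Nat.exists_eq_succ_of_ne_zero hM
  rw [Nat.add_sub_cancel] at htop
  simp only [degRS_eq_sum_bandDeg, Finset.sum_range_succ, Finset.sum_range_zero, add_assoc,
    Nat.reduceAdd]
  have hwrap : ((m + 4 : ℕ) : ZMod (m + 1 + 3)) = ((0 : ℕ) : ZMod (m + 1 + 3)) := by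
    simp [show m + 4 = m + 1 + 3 by ring]
  rw [Finset.sum_congr rfl fun j hj => by
      rw [row_glue_of_lt c c' (k := j) (by simp at hj; omega),
        row_glue_of_lt c c' (k := j + 1) (by simp at hj; omega)],
    row_glue_of_lt c c' (k := m) (by omega), row_glue_of_le c c' (k := m + 1) (by omega) (by omega),
    row_glue_of_le c c' (k := m + 2) (by omega) (by omega),
    row_glue_of_le c c' (k := m + 3) (by omega) (by omega), hwrap, row_glue_of_lt c c' (by omega)]
  simp only [Nat.cast_add, Nat.cast_one, tsub_self, Nat.cast_zero, Nat.reduceSubDiff,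
    add_tsub_cancel_left, Nat.cast_ofNat, CharP.cast_eq_zero, zero_add, add_right_inj]
  rw [htop, show (3 : ZMod 3) = 0 from rfl]
  ring

end Glue

/-- **Gluing lemma.** If `c` is a proper 4-coloring of T(L,M) and `c'` one of
T(L,3) with the same top row (`c'(x,2) = c(x,M−1)` for all `x`), then the glued
coloring is a proper 4-coloring of T(L,M+3) of the same degree as `c`. -/
theorem glue_proper_deg (L M : ℕ) (hL : 3 ≤ L) (hM : 3 ≤ M)
    (c : ZMod L × ZMod M → Fin 4) (hc : IsProperColoring (TriRS L M) c)
    (c' : ZMod L × ZMod 3 → Fin 4) (hc' : IsProperColoring (TriRS L 3) c')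
    (htop : ∀ x : ZMod L, c' (x, 2) = c (x, ((M - 1 : ℕ) : ZMod M))) :
    IsProperColoring (TriRS L (M + 3)) (glue L M c c') ∧
    degRS L (M + 3) (glue L M c c') = degRS L M c := by
  have htop' : row c' 2 = row c ((M - 1 : ℕ) : ZMod M) := funext htop
  refine ⟨isProperColoring_of_isProperBand (isProperBand_row_glue c c' (by omega)
    (hc.isProperBand (by omega) (by omega)) (hc'.isProperBand (by omega) (by decide)) htop'), ?_⟩
  rw [degRS_glue c c' (by omega) htop', degRS_three_eq_zero (by omega) hc', add_zero]
end
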